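/- Let σ, θ ∈ (0,∞), let m be the measure on ℝ given by m(du) = (2/σ²) du + (2/θ) δ₀(du), and let q be the associated function. Then for all y, x ∈ ℝ: if y > 0 then q(y,x) = (x−y)²/σ² + 2 x⁻/θ; if y = 0 then q(y,x) = x²/σ² + |x|/θ; and if y < 0 then q(y,x) = (x−y)²/σ² + 2 x⁺/θ, where x⁺ = max(x,0) and x⁻ = −min(x,0). -/

import Mathlib

/-!
The map `m ↦ q` is linear on locally finite measures (`u ↦ m((y,u))` is monotone, hence
integrable), so `q` for the sticky measure is `2/σ²` times `q` for Lebesgue measure, namely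
`(x - y)²/2`, plus `2/θ` times `q` for `δ₀`. For `y ≠ 0` the function `u ↦ δ₀((y,u))` is, up to
sign, the indicator of the half-line on the side of `0` away from `y`, and its integral from `y`
to `x` is `x⁻` (for `y > 0`) or `x⁺` (for `y < 0`); for `y = 0` only the atom term `|x|/2` is left.
-/

open MeasureTheory

/-- The speed measure of sticky Brownian motion:
`m(du) = (2/σ²) du + (2/θ) δ₀(du)`. -/
noncomputable def stickyMeasure (σ θ : ℝ) : Measure ℝ :=
  ENNReal.ofReal (2 / σ^2) • (volume : Measure ℝ)
    + ENNReal.ofReal (2 / θ) • Measure.dirac 0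

/-- Signed measure of the open interval between `y` and `u`:
`m((y,u))` for `u ≥ y` and `-m((u,y))` for `u < y`. -/
noncomputable def signedIoo (m : Measure ℝ) (y u : ℝ) : ℝ :=
  if y ≤ u then (m (Set.Ioo y u)).toReal else -(m (Set.Ioo u y)).toReal

/-- The function `q(y,x) = (1/2) m({y}) |x−y| + ∫_y^x m((y,u)) du`. -/
noncomputable def qFun (m : Measure ℝ) (y x : ℝ) : ℝ :=
  (1 / 2) * (m {y}).toReal * |x - y| + ∫ u in y..x, signedIoo m y u

open Set

section SignedIoo

variable (μ ν : Measure ℝ) (y : ℝ)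

lemma signedIoo_smul (c : ENNReal) (u : ℝ) :
    signedIoo (c • μ) y u = c.toReal * signedIoo μ y u := by
  unfold signedIoo
  split_ifs <;> simp [ENNReal.toReal_mul]

variable [IsLocallyFiniteMeasure μ] [IsLocallyFiniteMeasure ν]

lemma signedIoo_add (u : ℝ) :
    signedIoo (μ + ν) y u = signedIoo μ y u + signedIoo ν y u := by
  unfold signedIoo
  split_ifs
  · exact ENNReal.toReal_add measure_Ioo_lt_top.ne measure_Ioo_lt_top.ne
  · rw [Measure.add_apply, ENNReal.toReal_add measure_Ioo_lt_top.ne measure_Ioo_lt_top.ne,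
      neg_add]

lemma monotone_signedIoo : Monotone (signedIoo μ y) := by
  intro u v huv
  unfold signedIoo
  split_ifs with hu hv hv
  · exact ENNReal.toReal_mono measure_Ioo_lt_top.ne (measure_mono (Ioo_subset_Ioo_right huv))
  · exact absurd (hu.trans huv) hv
  · exact (neg_nonpos.2 ENNReal.toReal_nonneg).trans ENNReal.toReal_nonneg
  · exact neg_le_neg
      (ENNReal.toReal_mono measure_Ioo_lt_top.ne (measure_mono (Ioo_subset_Ioo_left huv)))

end SignedIoo

section QFun

variable (μ ν : Measure ℝ) (y x : ℝ)

lemma qFun_smul (c : ENNReal) : qFun (c • μ) y x = c.toReal * qFun μ y x := by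
  simp only [qFun, signedIoo_smul, intervalIntegral.integral_const_mul, Measure.smul_apply,
    smul_eq_mul, ENNReal.toReal_mul]
  ring

lemma qFun_add [IsLocallyFiniteMeasure μ] [IsLocallyFiniteMeasure ν] :
    qFun (μ + ν) y x = qFun μ y x + qFun ν y x := by
  simp only [qFun, signedIoo_add, Measure.add_apply,
    ENNReal.toReal_add (measure_singleton_lt_top (μ := μ)).ne
      (measure_singleton_lt_top (μ := ν)).ne,
    intervalIntegral.integral_add ((monotone_signedIoo μ y).intervalIntegrable)
      ((monotone_signedIoo ν y).intervalIntegrable)]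
  ring

lemma signedIoo_volume (u : ℝ) : signedIoo volume y u = u - y := by
  unfold signedIoo
  split_ifs with h
  · rw [Real.volume_Ioo, ENNReal.toReal_ofReal (sub_nonneg.2 h)]
  · rw [Real.volume_Ioo, ENNReal.toReal_ofReal (by linarith), neg_sub]

lemma qFun_volume : qFun volume y x = (x - y) ^ 2 / 2 := by
  simp only [qFun, Real.volume_singleton, ENNReal.toReal_zero, mul_zero, zero_mul, zero_add,
    signedIoo_volume]
  rw [intervalIntegral.integral_sub intervalIntegral.intervalIntegrable_id
    intervalIntegrable_const, integral_id, intervalIntegral.integral_const, smul_eq_mul]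
  ring

end QFun

lemma toReal_dirac_Ioo (a s t : ℝ) :
    (Measure.dirac a (Ioo s t)).toReal = if s < a ∧ a < t then 1 else 0 := by
  rw [Measure.dirac_apply' _ measurableSet_Ioo, indicator_apply]
  split_ifs <;> simp_all

lemma signedIoo_dirac_of_lt {a y : ℝ} (h : a < y) (u : ℝ) :
    signedIoo (Measure.dirac a) y u = -(Iio a).indicator 1 u := by
  unfold signedIoo
  simp only [toReal_dirac_Ioo, indicator_apply, mem_Iio, Pi.one_apply]
  split_ifs <;> grind

lemma signedIoo_dirac_self (a u : ℝ) : signedIoo (Measure.dirac a) a u = 0 := by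
  simp [signedIoo]

lemma signedIoo_dirac_of_gt {a y : ℝ} (h : y < a) (u : ℝ) :
    signedIoo (Measure.dirac a) y u = (Ioi a).indicator 1 u := by
  unfold signedIoo
  simp only [toReal_dirac_Ioo, indicator_apply, mem_Ioi, Pi.one_apply]
  split_ifs <;> grind

lemma intervalIntegrable_indicator_Ioi_one (a y x : ℝ) :
    IntervalIntegrable ((Ioi a).indicator (1 : ℝ → ℝ)) volume y x :=
  ⟨(integrableOn_const measure_Ioc_lt_top.ne).indicator measurableSet_Ioi,
    (integrableOn_const measure_Ioc_lt_top.ne).indicator measurableSet_Ioi⟩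

lemma integral_indicator_Ioi_one_of_left (a c : ℝ) :
    ∫ u in a..c, (Ioi a).indicator (1 : ℝ → ℝ) u = max c a - a := by
  rcases le_total a c with h | h
  · rw [max_eq_left h, intervalIntegral.integral_congr_ae (g := fun _ => 1)]
    · simp
    · refine Filter.Eventually.of_forall fun u hu => ?_
      rw [uIoc_of_le h] at hu
      simp [hu.1]
  · rw [max_eq_right h, sub_self]
    refine intervalIntegral.integral_zero_ae (Filter.Eventually.of_forall fun u hu => ?_)
    rw [uIoc_of_ge h] at hu
    simp [hu.2]

lemma integral_indicator_Ioi_one (a y x : ℝ) :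
    ∫ u in y..x, (Ioi a).indicator (1 : ℝ → ℝ) u = max x a - max y a := by
  rw [← intervalIntegral.integral_interval_sub_left (intervalIntegrable_indicator_Ioi_one a a x)
    (intervalIntegrable_indicator_Ioi_one a a y), integral_indicator_Ioi_one_of_left,
    integral_indicator_Ioi_one_of_left]
  ring

lemma integral_indicator_Iio_one (a y x : ℝ) :
    ∫ u in y..x, (Iio a).indicator (1 : ℝ → ℝ) u = min x a - min y a := by
  have h : ∀ u, (Iio a).indicator (1 : ℝ → ℝ) u = (Ioi (-a)).indicator 1 (-u) := by
    intro u
    simp [indicator_apply]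
  simp only [h, intervalIntegral.integral_comp_neg, integral_indicator_Ioi_one, max_neg_neg]
  ring

lemma qFun_dirac_of_lt {a y : ℝ} (h : a < y) (x : ℝ) :
    qFun (Measure.dirac a) y x = a - min x a := by
  simp [qFun, h.ne', signedIoo_dirac_of_lt h, integral_indicator_Iio_one, min_eq_right h.le]

lemma qFun_dirac_self (a x : ℝ) : qFun (Measure.dirac a) a x = |x - a| / 2 := by
  simp only [qFun, Measure.dirac_apply_of_mem (mem_singleton a), ENNReal.toReal_one,
    signedIoo_dirac_self, intervalIntegral.integral_zero]
  ring

lemma qFun_dirac_of_gt {a y : ℝ} (h : y < a) (x : ℝ) :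
    qFun (Measure.dirac a) y x = max x a - a := by
  simp [qFun, h.ne, signedIoo_dirac_of_gt h, integral_indicator_Ioi_one, max_eq_right h.le]

lemma qFun_stickyMeasure (σ : ℝ) {θ : ℝ} (hθ : 0 ≤ θ) (y x : ℝ) :
    qFun (stickyMeasure σ θ) y x = (x - y) ^ 2 / σ ^ 2 + 2 / θ * qFun (Measure.dirac 0) y x := by
  -- `ENNReal.ofReal c` is `↑c.toNNReal` only after unfolding, which instance search does not do.
  have : IsLocallyFiniteMeasure (ENNReal.ofReal (2 / σ ^ 2) • (volume : Measure ℝ)) :=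
    isLocallyFiniteMeasureSMulNNReal _ _
  have : IsLocallyFiniteMeasure (ENNReal.ofReal (2 / θ) • Measure.dirac (0 : ℝ)) :=
    isLocallyFiniteMeasureSMulNNReal _ _
  rw [stickyMeasure, qFun_add, qFun_smul, qFun_smul, qFun_volume,
    ENNReal.toReal_ofReal (by positivity), ENNReal.toReal_ofReal (by positivity)]
  ring

theorem q_sticky_bm_general (σ θ : ℝ) (hθ : 0 < θ) (y x : ℝ) :
    (0 < y → qFun (stickyMeasure σ θ) y x
        = (x - y)^2 / σ^2 + 2 * (-min x 0) / θ) ∧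
    (y = 0 → qFun (stickyMeasure σ θ) y x = x^2 / σ^2 + |x| / θ) ∧
    (y < 0 → qFun (stickyMeasure σ θ) y x
        = (x - y)^2 / σ^2 + 2 * max x 0 / θ) := by
  refine ⟨fun hy => ?_, fun hy => ?_, fun hy => ?_⟩ <;> rw [qFun_stickyMeasure σ hθ.le]
  · rw [qFun_dirac_of_lt hy]
    ring
  · rw [hy, qFun_dirac_self, sub_zero]
    ring
  · rw [qFun_dirac_of_gt hy]
    ring

theorem q_sticky_bm (σ θ : ℝ) (hσ : 0 < σ) (hθ : 0 < θ) (y x : ℝ) :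
    (0 < y → qFun (stickyMeasure σ θ) y x
        = (x - y)^2 / σ^2 + 2 * (-min x 0) / θ) ∧
    (y = 0 → qFun (stickyMeasure σ θ) y x = x^2 / σ^2 + |x| / θ) ∧
    (y < 0 → qFun (stickyMeasure σ θ) y x
        = (x - y)^2 / σ^2 + 2 * max x 0 / θ) :=
  q_sticky_bm_general σ θ hθ y x
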